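/- The series ∑_{n=1}^∞ (-1)^{n-1} · n² · (n!)² / (2n)! converges and equals (4/125) · (5 − √5 · log((√5 + 1)/2)). -/

import Mathlib

/-!
By Euler's Beta integral, `(n+1)!² / (2n+2)! = (2n+3) ∫₀¹ (t(1-t))ⁿ⁺¹ dt`. Since `0 ≤ t(1-t) ≤ 1/4`
on `[0,1]`, the series may be summed under the integral sign, and the inner sum is the power series
`G(r) = ∑ (n+1)²(2n+3) rⁿ = 12/(1-r)⁴ - 10/(1-r)³ + 1/(1-r)²` (a combination of binomial series) at
`r = -t(1-t)`. The resulting rational integral has an explicit primitive; its logarithmic part comes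
from the factorisation `1 + t(1-t) = (t + 1/φ)(φ - t)` with `φ = (1+√5)/2`.
-/

open MeasureTheory Real Nat

theorem integral_pow_mul_one_sub_pow (a b : ℕ) :
    ∫ x in (0 : ℝ)..1, x ^ a * (1 - x) ^ b = (a ! * b ! : ℝ) / (a + b + 1)! := by
  have hGamma := Complex.Gamma_mul_Gamma_eq_betaIntegral (s := (a : ℂ) + 1) (t := (b : ℂ) + 1)
    (by simp; positivity) (by simp; positivity)
  have hsum : ((a : ℂ) + 1) + ((b : ℂ) + 1) = ((a + b + 1 : ℕ) : ℂ) + 1 := by push_cast; ring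
  have hbeta : Complex.betaIntegral ((a : ℂ) + 1) ((b : ℂ) + 1)
      = ((∫ x in (0 : ℝ)..1, x ^ a * (1 - x) ^ b : ℝ) : ℂ) := by
    rw [Complex.betaIntegral, ← intervalIntegral.integral_ofReal]
    refine intervalIntegral.integral_congr fun x _ => ?_
    push_cast
    simp only [add_sub_cancel_right, Complex.cpow_natCast]
  rw [hsum, hbeta, Complex.Gamma_nat_eq_factorial, Complex.Gamma_nat_eq_factorial,
    Complex.Gamma_nat_eq_factorial] at hGamma
  rw [eq_div_iff (by positivity)]
  exact_mod_cast (hGamma.trans (mul_comm _ _)).symm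

theorem hasSum_succ_sq_mul_two_mul_add_three_mul_geometric {𝕜 : Type*} [NormedField 𝕜]
    [CompleteSpace 𝕜] {r : 𝕜} (hr : ‖r‖ < 1) :
    HasSum (fun n : ℕ => ((n : 𝕜) + 1) ^ 2 * (2 * n + 3) * r ^ n)
      (12 / (1 - r) ^ 4 - 10 / (1 - r) ^ 3 + 1 / (1 - r) ^ 2) := by
  have h3 := hasSum_choose_mul_geometric_of_norm_lt_one 3 hr
  have h2 := hasSum_choose_mul_geometric_of_norm_lt_one 2 hr
  have h1 := hasSum_choose_mul_geometric_of_norm_lt_one 1 hr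
  have hcoeff (n : ℕ) : ((n : 𝕜) + 1) ^ 2 * (2 * n + 3) * r ^ n
      = 12 * ((n + 3).choose 3 * r ^ n) - 10 * ((n + 2).choose 2 * r ^ n)
        + (n + 1).choose 1 * r ^ n := by
    have hchoose : 12 * (n + 3).choose 3 + (n + 1).choose 1
        = (n + 1) ^ 2 * (2 * n + 3) + 10 * (n + 2).choose 2 := by
      have h3 := Nat.descFactorial_eq_factorial_mul_choose (n + 3) 3
      have h2 := Nat.descFactorial_eq_factorial_mul_choose (n + 2) 2
      simp [Nat.descFactorial_succ, Nat.factorial] at h3 h2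
      rw [Nat.choose_one_right]
      nlinarith
    have := congrArg (Nat.cast : ℕ → 𝕜) hchoose
    push_cast at this
    linear_combination (-(r ^ n)) * this
  have hvalue : 12 / (1 - r) ^ 4 - 10 / (1 - r) ^ 3 + 1 / (1 - r) ^ 2
      = 12 * (1 / (1 - r) ^ (3 + 1)) - 10 * (1 / (1 - r) ^ (2 + 1)) + 1 / (1 - r) ^ (1 + 1) := by
    ring
  rw [hvalue]
  exact (((h3.mul_left 12).sub (h2.mul_left 10)).add h1).congr_fun hcoeff

theorem mul_one_sub_mem_Icc {t : ℝ} (ht : t ∈ Set.Icc (0 : ℝ) 1) :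
    t * (1 - t) ∈ Set.Icc (0 : ℝ) (1 / 4) :=
  ⟨mul_nonneg ht.1 (sub_nonneg.2 ht.2), by nlinarith [sq_nonneg (2 * t - 1)]⟩

theorem norm_mul_succ_sq_mul_two_mul_add_three_mul_pow_le {x : ℝ}
    (hx : x ∈ Set.Icc (0 : ℝ) (1 / 4)) (n : ℕ) :
    ‖x * (((n : ℝ) + 1) ^ 2 * (2 * n + 3) * (-x) ^ n)‖
      ≤ 1 / 4 * (((n : ℝ) + 1) ^ 2 * (2 * n + 3) * (1 / 4) ^ n) := by
  obtain ⟨hx0, hx1⟩ := hx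
  rw [norm_mul, norm_mul, norm_pow, norm_neg, Real.norm_of_nonneg hx0,
    Real.norm_of_nonneg (by positivity)]
  gcongr

noncomputable def apelblatIntegrand (t : ℝ) : ℝ :=
  t * (1 - t) * (12 / (1 + t * (1 - t)) ^ 4 - 10 / (1 + t * (1 - t)) ^ 3
    + 1 / (1 + t * (1 - t)) ^ 2)

/-- Found by Hermite reduction: the rational part is `(1 - 2t) P(1/w)` with `w = 1 + t(1-t)`, and
the remaining `-1/(25w)` integrates to logarithms of the two linear factors of `w` (for `s² = 5`). -/
noncomputable def apelblatPrimitive (s t : ℝ) : ℝ :=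
  -(1 / (25 * s)) * (log (t + (s - 1) / 2) - log ((s + 1) / 2 - t))
    + (1 - 2 * t) * (13 / 25 / (1 + t * (1 - t)) - 7 / 5 / (1 + t * (1 - t)) ^ 2
      + 4 / 5 / (1 + t * (1 - t)) ^ 3)

theorem hasDerivAt_apelblatPrimitive {s t : ℝ} (hs : s ^ 2 = 5) (ht : 1 + t * (1 - t) ≠ 0) :
    HasDerivAt (apelblatPrimitive s) (apelblatIntegrand t) t := by
  have hfactor : (t + (s - 1) / 2) * ((s + 1) / 2 - t) = 1 + t * (1 - t) := by
    linear_combination hs / 4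
  have hl : t + (s - 1) / 2 ≠ 0 := left_ne_zero_of_mul (hfactor ▸ ht)
  have hr : (s + 1) / 2 - t ≠ 0 := right_ne_zero_of_mul (hfactor ▸ ht)
  have hs0 : s ≠ 0 := by rintro rfl; norm_num at hs
  have hw := ((hasDerivAt_id t).mul ((hasDerivAt_id t).const_sub 1)).const_add 1
  have hlog := ((((hasDerivAt_id t).add_const ((s - 1) / 2)).log hl).sub
    (((hasDerivAt_id t).const_sub ((s + 1) / 2)).log hr)).const_mul (-(1 / (25 * s)))
  have hrat := (((hasDerivAt_id t).const_mul 2).const_sub 1).mul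
    ((((hasDerivAt_const t (13 / 25 : ℝ)).div hw ht).sub
      ((hasDerivAt_const t (7 / 5 : ℝ)).div (hw.pow 2) (pow_ne_zero 2 ht))).add
      ((hasDerivAt_const t (4 / 5 : ℝ)).div (hw.pow 3) (pow_ne_zero 3 ht)))
  have hlog' : 1 / (t + (s - 1) / 2) - -1 / ((s + 1) / 2 - t) = s / (1 + t * (1 - t)) := by
    rw [div_sub_div _ _ hl hr, hfactor]; ring
  refine (hlog.add hrat).congr_deriv ?_
  simp only [apelblatIntegrand, id, Pi.div_apply, Pi.sub_apply, Pi.add_apply, Pi.pow_apply,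
    Pi.mul_apply, hlog']
  field_simp
  ring

theorem integral_apelblatIntegrand :
    ∫ t in (0 : ℝ)..1, apelblatIntegrand t = 4 / 125 * (5 - √5 * log ((√5 + 1) / 2)) := by
  set s := √5
  have hs : s ^ 2 = 5 := sq_sqrt (by norm_num)
  have hs0 : 0 < s := by positivity
  have hw (t : ℝ) (ht : t ∈ Set.uIcc (0 : ℝ) 1) : 1 + t * (1 - t) ≠ 0 := by
    rw [Set.uIcc_of_le zero_le_one] at ht
    linarith [(mul_one_sub_mem_Icc ht).1]
  rw [intervalIntegral.integral_eq_sub_of_hasDerivAt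
    (fun t ht => hasDerivAt_apelblatPrimitive hs (hw t ht))
    (ContinuousOn.intervalIntegrable (by
      unfold apelblatIntegrand; fun_prop (disch := intro t ht; simp [hw t ht])))]
  have hlog : log ((s - 1) / 2) = -log ((s + 1) / 2) := by
    rw [← log_inv]
    congr 1
    field_simp
    linear_combination hs
  norm_num [apelblatPrimitive]
  rw [show (1 : ℝ) + (s - 1) / 2 = (s + 1) / 2 by ring, show (s + 1) / 2 - 1 = (s - 1) / 2 by ring,
    hlog]
  field_simp
  linear_combination 100 * log ((s + 1) / 2) * hs

theorem hasSum_integral_mul_succ_sq_mul_two_mul_add_three_mul_pow :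
    HasSum (fun n : ℕ => ∫ t in (0 : ℝ)..1,
        t * (1 - t) * (((n : ℝ) + 1) ^ 2 * (2 * n + 3) * (-(t * (1 - t))) ^ n))
      (∫ t in (0 : ℝ)..1, apelblatIntegrand t) := by
  have hI : Set.uIoc (0 : ℝ) 1 ⊆ Set.Icc 0 1 := by
    rw [Set.uIoc_of_le zero_le_one]; exact Set.Ioc_subset_Icc_self
  have hbound := hasSum_succ_sq_mul_two_mul_add_three_mul_geometric (𝕜 := ℝ) (r := 1 / 4)
    (by norm_num [abs_of_pos])
  refine intervalIntegral.hasSum_integral_of_dominated_convergence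
    (fun n _ => 1 / 4 * (((n : ℝ) + 1) ^ 2 * (2 * n + 3) * (1 / 4) ^ n))
    (fun n => (by fun_prop : Continuous _).aestronglyMeasurable)
    (fun n => Filter.Eventually.of_forall fun t ht =>
      norm_mul_succ_sq_mul_two_mul_add_three_mul_pow_le (mul_one_sub_mem_Icc (hI ht)) n)
    (Filter.Eventually.of_forall fun t _ => (hbound.mul_left _).summable)
    intervalIntegrable_const
    (Filter.Eventually.of_forall fun t ht => ?_)
  have hx := mul_one_sub_mem_Icc (hI ht)
  have hr : ‖-(t * (1 - t))‖ < 1 := by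
    rw [norm_neg, Real.norm_of_nonneg hx.1]; linarith [hx.2]
  simpa only [apelblatIntegrand, sub_neg_eq_add] using
    (hasSum_succ_sq_mul_two_mul_add_three_mul_geometric hr).mul_left (t * (1 - t))

theorem integral_mul_succ_sq_mul_two_mul_add_three_mul_pow (n : ℕ) :
    ∫ t in (0 : ℝ)..1, t * (1 - t) * (((n : ℝ) + 1) ^ 2 * (2 * n + 3) * (-(t * (1 - t))) ^ n)
      = (-1) ^ n * ((n : ℝ) + 1) ^ 2 * (n + 1)! ^ 2 / (2 * (n + 1))! := by
  have hintegrand (t : ℝ) :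
      t * (1 - t) * (((n : ℝ) + 1) ^ 2 * (2 * n + 3) * (-(t * (1 - t))) ^ n)
        = (-1) ^ n * ((n : ℝ) + 1) ^ 2 * (2 * n + 3) * (t ^ (n + 1) * (1 - t) ^ (n + 1)) := by
    rw [neg_pow, mul_pow]; ring
  have hfact : ((n + 1 + (n + 1) + 1)! : ℝ) = (2 * n + 3) * (2 * (n + 1))! := by
    rw [show n + 1 + (n + 1) + 1 = 2 * (n + 1) + 1 by ring, Nat.factorial_succ]
    push_cast; ring
  simp_rw [hintegrand]
  rw [intervalIntegral.integral_const_mul, integral_pow_mul_one_sub_pow, hfact]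
  field_simp

/-- ∑_{n=1}^∞ (-1)^{n-1}·n²·(n!)²/(2n)! converges and equals
(4/125)·(5 − √5·log((√5 + 1)/2)). -/
theorem apelblat_corrected_40 :
    HasSum (fun n : ℕ =>
      (-1 : ℝ) ^ n * ((n : ℝ) + 1) ^ 2 * (Nat.factorial (n + 1) : ℝ) ^ 2 /
        (Nat.factorial (2 * (n + 1)) : ℝ))
      (4 / 125 * (5 - Real.sqrt 5 * Real.log ((Real.sqrt 5 + 1) / 2))) := by
  rw [← integral_apelblatIntegrand]
  simpa only [integral_mul_succ_sq_mul_two_mul_add_three_mul_pow] using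
    hasSum_integral_mul_succ_sq_mul_two_mul_add_three_mul_pow
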